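/- arXiv:2406.14420 — 6 statements merged into one kernel-verified Lean document; each statement's English description precedes it below -/
import Mathlib

section
/- Let Φ : ℝ^{m_0} × ℝ^{m_1} × ... × ℝ^{m_K} → ℝ be L-smooth, and for each k ∈ {0,...,K} let H_k : ℝ^{d_k} → ℝ^{m_k} be differentiable with ‖DH_k(x_k)‖ ≤ H̄ (operator norm) for all x_k. Define f(x_0,...,x_K) = Φ(H_0(x_0),...,H_K(x_K)). Fix points x_0,...,x_K and vectors G_k ∈ ℝ^{m_k} for k = 0,...,K, and for each k define the surrogate partial gradient g_k = (DH_k(x_k))* ∇_k Φ(G_0,...,G_{k-1}, H_k(x_k), G_{k+1},...,G_K), where ∇_k Φ denotes the gradient of Φ with respect to its k-th block and * denotes the adjoint. Then Σ_{k=0}^{K} ‖g_k − ∇_k f(x)‖² ≤ K H̄² L² Σ_{k=0}^{K} ‖G_k − H_k(x_k)‖². -/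
open ContinuousLinearMap

section GradAux

variable {E F : Type*} [NormedAddCommGroup E] [InnerProductSpace ℝ E] [CompleteSpace E]
  [NormedAddCommGroup F] [InnerProductSpace ℝ F] [CompleteSpace F]

private lemma gradient_comp_aux (Φ : F → ℝ) (f : E → F) (x : E) (f' : E →L[ℝ] F)
    (hf : HasFDerivAt f f' x) (hΦ : DifferentiableAt ℝ Φ (f x)) :
    gradient (fun y => Φ (f y)) x = adjoint f' (gradient Φ (f x)) := by
  have h1 : HasFDerivAt Φ ((InnerProductSpace.toDual ℝ F) (gradient Φ (f x))) (f x) := by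
    have := hΦ.hasFDerivAt
    rwa [show (InnerProductSpace.toDual ℝ F) (gradient Φ (f x)) = fderiv ℝ Φ (f x) from
      (InnerProductSpace.toDual ℝ F).apply_symm_apply _]
  have h2 : HasFDerivAt (fun y => Φ (f y))
      (((InnerProductSpace.toDual ℝ F) (gradient Φ (f x))).comp f') x := h1.comp x hf
  have h3 : ((InnerProductSpace.toDual ℝ F) (gradient Φ (f x))).comp f'
      = (InnerProductSpace.toDual ℝ E) (adjoint f' (gradient Φ (f x))) := by
    ext w
    simp [InnerProductSpace.toDual_apply_apply, adjoint_inner_left]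
  rw [h3] at h2
  exact (hasGradientAt_iff_hasFDerivAt.mpr h2).gradient

end GradAux

section InclAux

variable {ι : Type*} [Fintype ι] [DecidableEq ι] {E : ι → Type*}
  [∀ i, NormedAddCommGroup (E i)] [∀ i, NormedSpace ℝ (E i)]

private noncomputable def inclAux (k : ι) : E k →L[ℝ] PiLp 2 E :=
  (PiLp.continuousLinearEquiv 2 ℝ E).symm.toContinuousLinearMap.comp
    (ContinuousLinearMap.pi (Pi.single k (ContinuousLinearMap.id ℝ (E k))))

private lemma hasFDerivAt_update_piLp (c : PiLp 2 E) (k : ι) (y : E k) :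
    HasFDerivAt (fun z => (WithLp.equiv 2 (∀ i, E i)).symm (Function.update c k z))
      (inclAux k) y :=
  ((PiLp.hasFDerivAt_toLp (𝕜 := ℝ) 2 (Function.update c k y)).comp y
    (hasFDerivAt_update (c : ∀ i, E i) y))

private lemma inclAux_apply (k : ι) (y : E k) (j : ι) :
    (inclAux k y : PiLp 2 E) j = Pi.single k y j := by
  show ContinuousLinearMap.pi (Pi.single k (ContinuousLinearMap.id ℝ (E k))) y j = _
  rw [ContinuousLinearMap.pi_apply]
  rcases eq_or_ne j k with rfl | hj
  · simp
  · rw [Pi.single_eq_of_ne hj, Pi.single_eq_of_ne hj]; rfl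

private lemma norm_inclAux_le (k : ι) : ‖(inclAux k : E k →L[ℝ] PiLp 2 E)‖ ≤ 1 := by
  refine opNorm_le_bound _ zero_le_one fun y => ?_
  rw [one_mul]
  have h2 : ‖(inclAux k y : PiLp 2 E)‖ ^ 2 = ‖y‖ ^ 2 := by
    rw [PiLp.norm_sq_eq_of_L2]
    rw [Finset.sum_eq_single k]
    · rw [inclAux_apply]; simp
    · intro j _ hj; rw [inclAux_apply, Pi.single_eq_of_ne hj]; simp
    · simp
  nlinarith [norm_nonneg (inclAux k y : PiLp 2 E), norm_nonneg y]

end InclAux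

set_option maxHeartbeats 1000000 in
/-- **Lemma 1 (surrogate offset bound).**
`Φ` is `L`-smooth on the product of the representation spaces, each local map `H k` is
differentiable with derivative (operator norm) bounded by `Hb`, and
`f (x₀,…,x_K) = Φ (H₀ x₀, …, H_K x_K)`.  Each surrogate partial gradient `g k` uses the
error-feedback surrogates `G j` in place of `H j (x j)` for all blocks `j ≠ k`.  Then the total
squared deviation of the surrogate gradient from the true gradient is bounded by
`K * Hb² * L²` times the total compression distortion. -/
theorem surrogate_offset_bound
    (K : ℕ) (d m : Fin (K + 1) → ℕ) (L Hb : ℝ)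
    (Φ : PiLp 2 (fun k => EuclideanSpace ℝ (Fin (m k))) → ℝ)
    (H : ∀ k, EuclideanSpace ℝ (Fin (d k)) → EuclideanSpace ℝ (Fin (m k)))
    (hΦdiff : Differentiable ℝ Φ)
    (hΦsmooth : ∀ u v : PiLp 2 (fun k => EuclideanSpace ℝ (Fin (m k))),
      ‖gradient Φ u - gradient Φ v‖ ≤ L * ‖u - v‖)
    (hHdiff : ∀ k, Differentiable ℝ (H k))
    (hHbound : ∀ k (xk : EuclideanSpace ℝ (Fin (d k))), ‖fderiv ℝ (H k) xk‖ ≤ Hb)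
    (x : ∀ k, EuclideanSpace ℝ (Fin (d k)))
    (G : ∀ k, EuclideanSpace ℝ (Fin (m k)))
    -- the surrogate partial gradients
    (g : ∀ k, EuclideanSpace ℝ (Fin (d k)))
    (hg : ∀ k, g k = (ContinuousLinearMap.adjoint (fderiv ℝ (H k) (x k)))
      (gradient (fun y => Φ (WithLp.toLp 2 (Function.update G k y))) (H k (x k))))
    -- the true partial gradients of f
    (gradf : ∀ k, EuclideanSpace ℝ (Fin (d k)))
    (hgradf : ∀ k, gradf k = gradient
      (fun y => Φ (WithLp.toLp 2 (fun j => H j (Function.update x k y j)))) (x k)) :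
    ∑ k, ‖g k - gradf k‖ ^ 2
      ≤ (K : ℝ) * Hb ^ 2 * L ^ 2 * ∑ k, ‖G k - H k (x k)‖ ^ 2 := by
  classical
  have hHb0 : 0 ≤ Hb := le_trans (norm_nonneg _) (hHbound 0 (x 0))
  set S : ℝ := ∑ k, ‖G k - H k (x k)‖ ^ 2 with hS
  have key : ∀ k, ‖g k - gradf k‖ ^ 2 ≤ Hb ^ 2 * L ^ 2 * (S - ‖G k - H k (x k)‖ ^ 2) := by
    intro k
    set u₁ : PiLp 2 (fun j => EuclideanSpace ℝ (Fin (m j))) :=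
      (WithLp.equiv 2 (∀ j, EuclideanSpace ℝ (Fin (m j)))).symm
        (Function.update G k (H k (x k))) with hu₁
    set u₂ : PiLp 2 (fun j => EuclideanSpace ℝ (Fin (m j))) :=
      (WithLp.equiv 2 (∀ j, EuclideanSpace ℝ (Fin (m j)))).symm
        (fun j => H j (x j)) with hu₂
    -- surrogate gradient
    have hgA : gradient (fun y => Φ (WithLp.toLp 2 (Function.update G k y))) (H k (x k))
        = adjoint (inclAux (E := fun j => EuclideanSpace ℝ (Fin (m j))) k)
            (gradient Φ u₁) :=
      gradient_comp_aux Φ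
        (fun z : EuclideanSpace ℝ (Fin (m k)) =>
          (WithLp.equiv 2 (∀ j, EuclideanSpace ℝ (Fin (m j)))).symm (Function.update G k z))
        (H k (x k)) (inclAux (E := fun j => EuclideanSpace ℝ (Fin (m j))) k)
        (hasFDerivAt_update_piLp
          (WithLp.toLp 2 G) k (H k (x k)))
        (hΦdiff _)
    -- true gradient
    have hfunext : (fun y => Φ (WithLp.toLp 2 (fun j => H j (Function.update x k y j))))
        = fun y => Φ ((WithLp.equiv 2 (∀ j, EuclideanSpace ℝ (Fin (m j)))).symm
            (Function.update (fun j => H j (x j)) k (H k y))) := by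
      funext y
      congr 1
      show WithLp.toLp 2 _ = WithLp.toLp 2 _
      congr 1
      funext j
      rcases eq_or_ne j k with rfl | hj
      · simp
      · simp [Function.update_apply, hj]
    have hcomp : HasFDerivAt
        (fun y => (WithLp.equiv 2 (∀ j, EuclideanSpace ℝ (Fin (m j)))).symm
            (Function.update (fun j => H j (x j)) k (H k y)))
        ((inclAux (E := fun j => EuclideanSpace ℝ (Fin (m j))) k).comp
          (fderiv ℝ (H k) (x k))) (x k) :=
      (hasFDerivAt_update_piLp
        (WithLp.toLp 2 (fun j => H j (x j))) k
        (H k (x k))).comp (x k) ((hHdiff k) (x k)).hasFDerivAt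
    have hgB : gradf k = adjoint (fderiv ℝ (H k) (x k))
        (adjoint (inclAux (E := fun j => EuclideanSpace ℝ (Fin (m j))) k)
          (gradient Φ u₂)) := by
      rw [hgradf k, hfunext]
      have h0 := gradient_comp_aux Φ
        (fun y => (WithLp.equiv 2 (∀ j, EuclideanSpace ℝ (Fin (m j)))).symm
            (Function.update (fun j => H j (x j)) k (H k y)))
        (x k)
        ((inclAux (E := fun j => EuclideanSpace ℝ (Fin (m j))) k).comp (fderiv ℝ (H k) (x k)))
        hcomp (hΦdiff _)
      have hupd : Function.update (fun j => H j (x j)) k (H k (x k))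
          = (fun j => H j (x j)) := Function.update_eq_self k _
      beta_reduce at h0
      rw [h0, adjoint_comp, ContinuousLinearMap.comp_apply, hupd]
    have hdiff : g k - gradf k
        = adjoint (fderiv ℝ (H k) (x k))
            (adjoint (inclAux (E := fun j => EuclideanSpace ℝ (Fin (m j))) k)
              (gradient Φ u₁ - gradient Φ u₂)) := by
      rw [hg k, hgA, hgB, map_sub, map_sub]
    -- norm bounds
    have hn1 : ‖g k - gradf k‖ ≤ Hb * (L * ‖u₁ - u₂‖) := by
      rw [hdiff]
      calc ‖adjoint (fderiv ℝ (H k) (x k))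
              (adjoint (inclAux (E := fun j => EuclideanSpace ℝ (Fin (m j))) k)
                (gradient Φ u₁ - gradient Φ u₂))‖
          ≤ ‖adjoint (fderiv ℝ (H k) (x k))‖ *
              ‖adjoint (inclAux (E := fun j => EuclideanSpace ℝ (Fin (m j))) k)
                (gradient Φ u₁ - gradient Φ u₂)‖ := le_opNorm _ _
        _ ≤ Hb * ‖adjoint (inclAux (E := fun j => EuclideanSpace ℝ (Fin (m j))) k)
                (gradient Φ u₁ - gradient Φ u₂)‖ := by
            apply mul_le_mul_of_nonneg_right _ (norm_nonneg _)
            rw [LinearIsometryEquiv.norm_map]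
            exact hHbound k (x k)
        _ ≤ Hb * (L * ‖u₁ - u₂‖) := by
            apply mul_le_mul_of_nonneg_left _ hHb0
            calc ‖adjoint (inclAux (E := fun j => EuclideanSpace ℝ (Fin (m j))) k)
                    (gradient Φ u₁ - gradient Φ u₂)‖
                ≤ ‖adjoint (inclAux (E := fun j => EuclideanSpace ℝ (Fin (m j))) k)‖ *
                    ‖gradient Φ u₁ - gradient Φ u₂‖ := le_opNorm _ _
              _ ≤ 1 * ‖gradient Φ u₁ - gradient Φ u₂‖ := by
                  apply mul_le_mul_of_nonneg_right _ (norm_nonneg _)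
                  rw [LinearIsometryEquiv.norm_map]
                  exact norm_inclAux_le k
              _ = ‖gradient Φ u₁ - gradient Φ u₂‖ := one_mul _
              _ ≤ L * ‖u₁ - u₂‖ := hΦsmooth u₁ u₂
    -- distortion bound
    have hn2 : ‖u₁ - u₂‖ ^ 2 ≤ S - ‖G k - H k (x k)‖ ^ 2 := by
      rw [PiLp.norm_sq_eq_of_L2]
      have hterm : ∀ j : Fin (K + 1), ‖(u₁ - u₂) j‖ ^ 2
          = if j = k then 0 else ‖G j - H j (x j)‖ ^ 2 := by
        intro j
        have hj0 : (u₁ - u₂) j = u₁ j - u₂ j := rfl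
        rw [hj0]
        rcases eq_or_ne j k with rfl | hj
        · simp [hu₁, hu₂]
        · simp [hu₁, hu₂, Function.update_apply, hj]
      calc (∑ j, ‖(u₁ - u₂) j‖ ^ 2)
          = ∑ j, (if j = k then 0 else ‖G j - H j (x j)‖ ^ 2) :=
            Finset.sum_congr rfl fun j _ => hterm j
        _ = ∑ j ∈ Finset.univ.erase k, ‖G j - H j (x j)‖ ^ 2 := by
            rw [← Finset.sum_erase_add _ _ (Finset.mem_univ k), if_pos rfl, add_zero]
            exact Finset.sum_congr rfl fun j hj => if_neg (Finset.ne_of_mem_erase hj)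
        _ = S - ‖G k - H k (x k)‖ ^ 2 := by
            rw [Finset.sum_erase_eq_sub (Finset.mem_univ k)]
        _ ≤ S - ‖G k - H k (x k)‖ ^ 2 := le_refl _
    nlinarith [norm_nonneg (g k - gradf k), norm_nonneg (u₁ - u₂),
      mul_le_mul_of_nonneg_left hn2 (sq_nonneg (Hb * L))]
  calc ∑ k, ‖g k - gradf k‖ ^ 2
      ≤ ∑ k : Fin (K + 1), Hb ^ 2 * L ^ 2 * (S - ‖G k - H k (x k)‖ ^ 2) :=
        Finset.sum_le_sum fun k _ => key k
    _ = (K : ℝ) * Hb ^ 2 * L ^ 2 * S := by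
        rw [← Finset.mul_sum, Finset.sum_sub_distrib, Finset.sum_const, ← hS]
        simp [Finset.card_univ]
        ring
    _ = (K : ℝ) * Hb ^ 2 * L ^ 2 * ∑ k, ‖G k - H k (x k)‖ ^ 2 := by rw [hS]
end

section
/- Let Φ : ℝ^{m_0} × ℝ^{m_1} × ... × ℝ^{m_K} → ℝ be L-smooth, and for each k ∈ {0,...,K} let H_k : ℝ^{d_k} → ℝ^{m_k} be differentiable with ‖DH_k(x_k)‖ ≤ H̄ (operator norm) for all x_k. Define f(x_0,...,x_K) = Φ(H_0(x_0),...,H_K(x_K)). Fix points x_0,...,x_K and vectors G_k ∈ ℝ^{m_k} for k = 1,...,K, and for each k ∈ {0,...,K} define the surrogate partial gradient ∇̂_k = (DH_k(x_k))* ∇_k Φ(H_0(x_0), G_1,...,G_K), where ∇_k Φ denotes the gradient of Φ with respect to its k-th block and * denotes the adjoint. Then Σ_{k=0}^{K} ‖∇̂_k − ∇_k f(x)‖² ≤ (K+1) H̄² L² Σ_{k=1}^{K} ‖G_k − H_k(x_k)‖². -/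
open InnerProductSpace

section aux

variable {F F' : Type*} [NormedAddCommGroup F] [InnerProductSpace ℝ F] [CompleteSpace F]
  [NormedAddCommGroup F'] [InnerProductSpace ℝ F'] [CompleteSpace F']

lemma inner_gradient_apply (f : F → ℝ) (x v : F) :
    ⟪gradient f x, v⟫_ℝ = fderiv ℝ f x v := by
  rw [gradient, toDual_symm_apply]

lemma gradient_comp (φ : F' → ℝ) (g : F → F') (x : F)
    (hφ : DifferentiableAt ℝ φ (g x)) (hg : DifferentiableAt ℝ g x) :
    gradient (fun y => φ (g y)) x
      = ContinuousLinearMap.adjoint (fderiv ℝ g x) (gradient φ (g x)) := by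
  apply ext_inner_right ℝ
  intro v
  rw [inner_gradient_apply, ContinuousLinearMap.adjoint_inner_left, inner_gradient_apply]
  have hc : fderiv ℝ (fun y => φ (g y)) x = (fderiv ℝ φ (g x)).comp (fderiv ℝ g x) :=
    fderiv_comp x hφ hg
  rw [hc]
  rfl

variable {ι : Type*} [Fintype ι] [DecidableEq ι] {Em : ι → Type*}
  [∀ i, NormedAddCommGroup (Em i)] [∀ i, InnerProductSpace ℝ (Em i)]
  [∀ i, FiniteDimensional ℝ (Em i)]

noncomputable def singCLM (Em : ι → Type*) [∀ i, NormedAddCommGroup (Em i)]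
    [∀ i, InnerProductSpace ℝ (Em i)] [∀ i, FiniteDimensional ℝ (Em i)] (k : ι) :
    Em k →L[ℝ] PiLp 2 Em :=
  LinearMap.toContinuousLinearMap
    (((WithLp.linearEquiv 2 ℝ (∀ i, Em i)).symm.toLinearMap).comp (LinearMap.single ℝ Em k))

lemma singCLM_apply (k : ι) (y : Em k) (j : ι) :
    (singCLM Em k y) j = Pi.single k y j := rfl

lemma inner_singCLM (k : ι) (y : Em k) (b : PiLp 2 Em) :
    ⟪singCLM Em k y, b⟫_ℝ = ⟪y, b k⟫_ℝ := by
  rw [PiLp.inner_apply]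
  rw [Fintype.sum_eq_single k]
  · rw [singCLM_apply, Pi.single_eq_same]
  · intro j hj
    rw [singCLM_apply, Pi.single_eq_of_ne hj, inner_zero_left]

lemma piLp_hasFDerivAt_update (w : ∀ j, Em j) (k : ι) (y : Em k) :
    HasFDerivAt (fun z => WithLp.toLp 2 (Function.update w k z))
      (singCLM Em k) y := by
  have h : (fun z => WithLp.toLp 2 (Function.update w k z))
      = fun z => WithLp.toLp 2 (Function.update w k 0) + singCLM Em k z := by
    funext z
    ext j
    rcases eq_or_ne j k with rfl | hj
    · simp [PiLp.add_apply, singCLM_apply]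
    · simp [PiLp.add_apply, singCLM_apply,
        Function.update_of_ne hj, Pi.single_eq_of_ne hj]
  rw [h]
  exact ((singCLM Em k).hasFDerivAt).const_add _

lemma gradient_update (Φ : PiLp 2 Em → ℝ) (hΦ : Differentiable ℝ Φ) (w : ∀ j, Em j) (k : ι) :
    gradient (fun y => Φ (WithLp.toLp 2 (Function.update w k y))) (w k)
      = gradient Φ (WithLp.toLp 2 w) k := by
  apply ext_inner_right ℝ
  intro v
  rw [inner_gradient_apply]
  have hupd := piLp_hasFDerivAt_update (Em := Em) w k (w k)
  have h1 : HasFDerivAt Φ (fderiv ℝ Φ (WithLp.toLp 2 w))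
      (WithLp.toLp 2 (Function.update w k (w k))) := by
    rw [Function.update_eq_self]; exact (hΦ _).hasFDerivAt
  have hcomp : HasFDerivAt (fun y => Φ (WithLp.toLp 2 (Function.update w k y)))
      ((fderiv ℝ Φ (WithLp.toLp 2 w)).comp (singCLM Em k)) (w k) := h1.comp (w k) hupd
  rw [hcomp.fderiv, ContinuousLinearMap.comp_apply, ← inner_gradient_apply,
    real_inner_comm, inner_singCLM]
  exact real_inner_comm _ _

end aux

/-- **Private-label variant of Lemma 1 (surrogate offset bound).**
Every client block `k = 1,…,K` uses the error-feedback surrogate `G k` in place of its own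
exact representation `H k (x k)`, while block `0` (the server) is exact; the constant `K` of
Lemma 1 is replaced by `K + 1`. -/
theorem surrogate_offset_bound_private_labels
    (K : ℕ) (d m : Fin (K + 1) → ℕ) (L Hb : ℝ)
    (Φ : PiLp 2 (fun k => EuclideanSpace ℝ (Fin (m k))) → ℝ)
    (H : ∀ k, EuclideanSpace ℝ (Fin (d k)) → EuclideanSpace ℝ (Fin (m k)))
    (hΦdiff : Differentiable ℝ Φ)
    (hΦsmooth : ∀ u v : PiLp 2 (fun k => EuclideanSpace ℝ (Fin (m k))),
      ‖gradient Φ u - gradient Φ v‖ ≤ L * ‖u - v‖)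
    (hHdiff : ∀ k, Differentiable ℝ (H k))
    (hHbound : ∀ k (xk : EuclideanSpace ℝ (Fin (d k))), ‖fderiv ℝ (H k) xk‖ ≤ Hb)
    (x : ∀ k, EuclideanSpace ℝ (Fin (d k)))
    (G : ∀ k, EuclideanSpace ℝ (Fin (m k)))
    -- the common mixed point (H₀(x₀), G₁, …, G_K)
    (u : ∀ k, EuclideanSpace ℝ (Fin (m k)))
    (hu : u = Function.update G 0 (H 0 (x 0)))
    -- the surrogate partial gradients
    (gs : ∀ k, EuclideanSpace ℝ (Fin (d k)))
    (hgs : ∀ k, gs k = (ContinuousLinearMap.adjoint (fderiv ℝ (H k) (x k)))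
      (gradient (fun y => Φ (WithLp.toLp 2 (Function.update u k y))) (u k)))
    -- the true partial gradients of f
    (gradf : ∀ k, EuclideanSpace ℝ (Fin (d k)))
    (hgradf : ∀ k, gradf k = gradient
      (fun y => Φ (WithLp.toLp 2 (fun j => H j (Function.update x k y j)))) (x k)) :
    ∑ k, ‖gs k - gradf k‖ ^ 2
      ≤ ((K : ℝ) + 1) * Hb ^ 2 * L ^ 2 *
          ∑ k ∈ Finset.univ.erase 0, ‖G k - H k (x k)‖ ^ 2 := by
  set Hx : ∀ k, EuclideanSpace ℝ (Fin (m k)) := fun j => H j (x j) with hHx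
  set δ : PiLp 2 (fun k => EuclideanSpace ℝ (Fin (m k)))
    := gradient Φ (WithLp.toLp 2 u) - gradient Φ (WithLp.toLp 2 Hx) with hδ
  have hHb0 : 0 ≤ Hb := le_trans (norm_nonneg _) (hHbound 0 (x 0))
  -- rewrite gs
  have hgs' : ∀ k, gs k = (ContinuousLinearMap.adjoint (fderiv ℝ (H k) (x k)))
      (gradient Φ (WithLp.toLp 2 u) k) := by
    intro k
    rw [hgs k, gradient_update Φ hΦdiff u k]
  -- rewrite gradf
  have hgradf' : ∀ k, gradf k = (ContinuousLinearMap.adjoint (fderiv ℝ (H k) (x k)))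
      (gradient Φ (WithLp.toLp 2 Hx) k) := by
    intro k
    have hfun : ∀ y, (fun j => H j (Function.update x k y j))
        = Function.update Hx k (H k y) := by
      intro y
      funext j
      rcases eq_or_ne j k with rfl | hj
      · simp
      · simp [Function.update_of_ne hj, hHx]
    have h2 : gradf k = gradient (fun y => Φ (WithLp.toLp 2 (Function.update Hx k (H k y)))) (x k) := by
      rw [hgradf k]
      congr 1
      funext y
      rw [hfun y]
    have hd := (piLp_hasFDerivAt_update Hx k (H k (x k))).differentiableAt
    have hφd : DifferentiableAt ℝ (fun z => Φ (WithLp.toLp 2 (Function.update Hx k z))) (H k (x k)) :=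
      (hΦdiff _).comp _ hd
    have h3 := gradient_comp (fun z => Φ (WithLp.toLp 2 (Function.update Hx k z))) (H k) (x k)
      hφd ((hHdiff k) (x k))
    rw [h2, h3]
    congr 1
    have hHxk : Hx k = H k (x k) := rfl
    rw [← hHxk, gradient_update Φ hΦdiff Hx k]
  -- pointwise bound
  have hpt : ∀ k, ‖gs k - gradf k‖ ^ 2 ≤ Hb ^ 2 * ‖δ k‖ ^ 2 := by
    intro k
    have h1 : gs k - gradf k
        = (ContinuousLinearMap.adjoint (fderiv ℝ (H k) (x k))) (δ k) := by
      rw [hgs' k, hgradf' k, hδ, ← map_sub]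
      rfl
    have h2 : ‖gs k - gradf k‖ ≤ Hb * ‖δ k‖ := by
      rw [h1]
      calc ‖(ContinuousLinearMap.adjoint (fderiv ℝ (H k) (x k))) (δ k)‖
          ≤ ‖ContinuousLinearMap.adjoint (fderiv ℝ (H k) (x k))‖ * ‖δ k‖ :=
            ContinuousLinearMap.le_opNorm _ _
        _ ≤ Hb * ‖δ k‖ := by
            apply mul_le_mul_of_nonneg_right _ (norm_nonneg _)
            rw [LinearIsometryEquiv.norm_map ContinuousLinearMap.adjoint]
            exact hHbound k (x k)
    calc ‖gs k - gradf k‖ ^ 2 ≤ (Hb * ‖δ k‖) ^ 2 :=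
          pow_le_pow_left₀ (norm_nonneg _) h2 2
      _ = Hb ^ 2 * ‖δ k‖ ^ 2 := by ring
  -- sum of squares of δ coordinates
  have hδsum : ∑ k, ‖δ k‖ ^ 2 = ‖δ‖ ^ 2 := (PiLp.norm_sq_eq_of_L2 _ δ).symm
  set v2 : PiLp 2 (fun k => EuclideanSpace ℝ (Fin (m k))) :=
    WithLp.toLp 2 (fun j => u j - H j (x j)) with hv2
  have hδnorm : ‖δ‖ ≤ L * ‖v2‖ := hΦsmooth (WithLp.toLp 2 u) (WithLp.toLp 2 Hx)
  have hdiff : ‖v2‖ ^ 2 = ∑ k ∈ Finset.univ.erase 0, ‖G k - H k (x k)‖ ^ 2 := by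
    rw [PiLp.norm_sq_eq_of_L2]
    rw [← Finset.sum_erase_add _ _ (Finset.mem_univ (0 : Fin (K + 1)))]
    have h0 : ‖v2 0‖ ^ 2 = 0 := by
      have hz : v2 0 = u 0 - H 0 (x 0) := rfl
      rw [hz, hu]
      simp
    rw [h0, add_zero]
    apply Finset.sum_congr rfl
    intro k hk
    have hcoord : v2 k = u k - H k (x k) := rfl
    rw [hcoord, hu, Function.update_of_ne (Finset.ne_of_mem_erase hk)]
  have hδle : ‖δ‖ ^ 2 ≤ L ^ 2 * ∑ k ∈ Finset.univ.erase 0, ‖G k - H k (x k)‖ ^ 2 := by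
    calc ‖δ‖ ^ 2 ≤ (L * ‖v2‖) ^ 2 :=
          pow_le_pow_left₀ (norm_nonneg _) hδnorm 2
      _ = L ^ 2 * ‖v2‖ ^ 2 := by ring
      _ = L ^ 2 * ∑ k ∈ Finset.univ.erase 0, ‖G k - H k (x k)‖ ^ 2 := by rw [hdiff]
  have hS : 0 ≤ ∑ k ∈ Finset.univ.erase 0, ‖G k - H k (x k)‖ ^ 2 :=
    Finset.sum_nonneg fun k _ => sq_nonneg _
  calc ∑ k, ‖gs k - gradf k‖ ^ 2
      ≤ ∑ k, Hb ^ 2 * ‖δ k‖ ^ 2 := Finset.sum_le_sum fun k _ => hpt k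
    _ = Hb ^ 2 * ‖δ‖ ^ 2 := by rw [← Finset.mul_sum, hδsum]
    _ ≤ Hb ^ 2 * (L ^ 2 * ∑ k ∈ Finset.univ.erase 0, ‖G k - H k (x k)‖ ^ 2) :=
        mul_le_mul_of_nonneg_left hδle (sq_nonneg _)
    _ ≤ ((K : ℝ) + 1) * Hb ^ 2 * L ^ 2 * ∑ k ∈ Finset.univ.erase 0, ‖G k - H k (x k)‖ ^ 2 := by
        have h1 : (1 : ℝ) ≤ (K : ℝ) + 1 := by
          have := Nat.cast_nonneg (α := ℝ) K; linarith
        nlinarith [mul_nonneg (mul_nonneg (sq_nonneg Hb) (sq_nonneg L)) hS]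
end

section
/- Let C : ℝ^m → ℝ^m satisfy ‖C(v) − v‖² ≤ (1−α)‖v‖² for all v ∈ ℝ^m, where α ∈ (0,1]. Fix h, h', G ∈ ℝ^m and set G' = G + C(h' − G). Then for every ε > 0, ‖G' − h'‖² ≤ (1−α)(1+ε)‖G − h‖² + (1−α)(1+ε^{−1})‖h' − h‖². -/
/-!
The new error `G' - h'` is `C v - v` for `v = h' - G`, so contractivity bounds it by
`(1 - α) ‖h' - G‖²`; writing `h' - G = (h' - h) - (G - h)`, Young's inequality
`2ab ≤ εa² + ε⁻¹b²` splits `‖h' - G‖²` into the two terms of the bound.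
-/

theorem norm_sub_sq_le_one_add_mul {E : Type*} [SeminormedAddGroup E] (x y : E) {ε : ℝ}
    (hε : 0 < ε) : ‖x - y‖ ^ 2 ≤ (1 + ε) * ‖x‖ ^ 2 + (1 + ε⁻¹) * ‖y‖ ^ 2 := by
  have young := two_mul_le_add_mul_sq (a := ‖x‖) (b := ‖y‖) hε
  calc ‖x - y‖ ^ 2 ≤ (‖x‖ + ‖y‖) ^ 2 := by gcongr; exact norm_sub_le x y
    _ = ‖x‖ ^ 2 + ‖y‖ ^ 2 + 2 * ‖x‖ * ‖y‖ := by ring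
    _ ≤ (1 + ε) * ‖x‖ ^ 2 + (1 + ε⁻¹) * ‖y‖ ^ 2 := by linarith

theorem norm_add_apply_sub_sub_sq_le {E : Type*} [SeminormedAddCommGroup E] {c : ℝ}
    (hc : 0 ≤ c) {C : E → E} (hC : ∀ v, ‖C v - v‖ ^ 2 ≤ c * ‖v‖ ^ 2) (h h' G : E) {ε : ℝ}
    (hε : 0 < ε) :
    ‖G + C (h' - G) - h'‖ ^ 2 ≤ c * (1 + ε) * ‖G - h‖ ^ 2 + c * (1 + ε⁻¹) * ‖h' - h‖ ^ 2 :=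
  calc ‖G + C (h' - G) - h'‖ ^ 2 = ‖C (h' - G) - (h' - G)‖ ^ 2 := by congr 2; abel
    _ ≤ c * ‖(G - h) - (h' - h)‖ ^ 2 := by
      rw [sub_sub_sub_cancel_right, norm_sub_rev G]; exact hC _
    _ ≤ c * ((1 + ε) * ‖G - h‖ ^ 2 + (1 + ε⁻¹) * ‖h' - h‖ ^ 2) := by
      gcongr; exact norm_sub_sq_le_one_add_mul _ _ hε
    _ = c * (1 + ε) * ‖G - h‖ ^ 2 + c * (1 + ε⁻¹) * ‖h' - h‖ ^ 2 := by ring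

/-- **Deterministic one-step core of Lemma 2 (recursive distortion bound).**
If `C` is a deterministic contractive compressor with parameter `α ∈ (0,1]` and
`G' = G + C (h' - G)` is the EF21 error-feedback update, then for every `ε > 0`,
`‖G' - h'‖² ≤ (1-α)(1+ε)‖G - h‖² + (1-α)(1+ε⁻¹)‖h' - h‖²`. -/
theorem ef21_one_step_deterministic
    (m : ℕ) (α : ℝ) (hα : α ∈ Set.Ioc (0 : ℝ) 1)
    (C : EuclideanSpace ℝ (Fin m) → EuclideanSpace ℝ (Fin m))
    (hC : ∀ v : EuclideanSpace ℝ (Fin m), ‖C v - v‖ ^ 2 ≤ (1 - α) * ‖v‖ ^ 2)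
    (h h' G : EuclideanSpace ℝ (Fin m))
    (ε : ℝ) (hε : 0 < ε) :
    ‖(G + C (h' - G)) - h'‖ ^ 2
      ≤ (1 - α) * (1 + ε) * ‖G - h‖ ^ 2 + (1 - α) * (1 + ε⁻¹) * ‖h' - h‖ ^ 2 :=
  norm_add_apply_sub_sub_sq_le (sub_nonneg.mpr hα.2) hC h h' G hε
end

section
/- Let (Ω, F, P) be a probability space, α ∈ (0,1], and let C : ℝ^m × Ω → ℝ^m be measurable with E_ω ‖C(v, ω) − v‖² ≤ (1−α)‖v‖² for every fixed v ∈ ℝ^m. Fix h, h', G ∈ ℝ^m and set G'(ω) = G + C(h' − G, ω). Then for every ε > 0, E_ω ‖G'(ω) − h'‖² ≤ (1−α)(1+ε)‖G − h‖² + (1−α)(1+ε^{−1})‖h' − h‖². -/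
open MeasureTheory

/-! The EF21 error `G' - h'` is the compression error `C v - v` of the compressed vector
`v = h' - G`, so contractivity bounds its mean square by `(1 - α)‖v‖²`; splitting
`v = (h - G) + (h' - h)` with Young's inequality `2xy ≤ εx² + ε⁻¹y²` gives the bound. -/

theorem norm_add_sq_le_one_add_mul_add {E : Type*} [SeminormedAddGroup E] (a b : E) {ε : ℝ}
    (hε : 0 < ε) : ‖a + b‖ ^ 2 ≤ (1 + ε) * ‖a‖ ^ 2 + (1 + ε⁻¹) * ‖b‖ ^ 2 := by
  have young := two_mul_le_add_mul_sq (a := ‖a‖) (b := ‖b‖) hε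
  calc ‖a + b‖ ^ 2 ≤ (‖a‖ + ‖b‖) ^ 2 := by gcongr; exact norm_add_le a b
    _ ≤ (1 + ε) * ‖a‖ ^ 2 + (1 + ε⁻¹) * ‖b‖ ^ 2 := by linarith

theorem ef21_one_step_stochastic_general
    (m : ℕ) {Ω : Type*} [MeasureSpace Ω]
    (α : ℝ) (hα : α ∈ Set.Ioc (0 : ℝ) 1)
    (C : EuclideanSpace ℝ (Fin m) → Ω → EuclideanSpace ℝ (Fin m))
    (hC : ∀ v : EuclideanSpace ℝ (Fin m), ∫ ω, ‖C v ω - v‖ ^ 2 ≤ (1 - α) * ‖v‖ ^ 2)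
    (h h' G : EuclideanSpace ℝ (Fin m))
    (ε : ℝ) (hε : 0 < ε) :
    ∫ ω, ‖(G + C (h' - G) ω) - h'‖ ^ 2
      ≤ (1 - α) * (1 + ε) * ‖G - h‖ ^ 2 + (1 - α) * (1 + ε⁻¹) * ‖h' - h‖ ^ 2 := by
  have hsplit : ‖h' - G‖ ^ 2 ≤ (1 + ε) * ‖G - h‖ ^ 2 + (1 + ε⁻¹) * ‖h' - h‖ ^ 2 := by
    rw [← norm_sub_rev h G, show h' - G = (h - G) + (h' - h) by abel]
    exact norm_add_sq_le_one_add_mul_add _ _ hε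
  calc ∫ ω, ‖(G + C (h' - G) ω) - h'‖ ^ 2 = ∫ ω, ‖C (h' - G) ω - (h' - G)‖ ^ 2 := by
        congr with ω; abel_nf
    _ ≤ (1 - α) * ‖h' - G‖ ^ 2 := hC (h' - G)
    _ ≤ (1 - α) * ((1 + ε) * ‖G - h‖ ^ 2 + (1 + ε⁻¹) * ‖h' - h‖ ^ 2) :=
        mul_le_mul_of_nonneg_left hsplit (sub_nonneg.2 hα.2)
    _ = _ := by ring

/-- **Stochastic one-step core of Lemma 2 (recursive distortion bound).**
If `C` is a (random) contractive compressor with parameter `α ∈ (0,1]` and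
`G' ω = G + C (h' - G) ω` is the EF21 error-feedback update, then for every `ε > 0`,
`E ‖G' - h'‖² ≤ (1-α)(1+ε)‖G - h‖² + (1-α)(1+ε⁻¹)‖h' - h‖²`. -/
theorem ef21_one_step_stochastic
    (m : ℕ) {Ω : Type*} [MeasureSpace Ω] [IsProbabilityMeasure (volume : Measure Ω)]
    (α : ℝ) (hα : α ∈ Set.Ioc (0 : ℝ) 1)
    (C : EuclideanSpace ℝ (Fin m) → Ω → EuclideanSpace ℝ (Fin m))
    (hCmeas : Measurable fun p : EuclideanSpace ℝ (Fin m) × Ω => C p.1 p.2)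
    (hC : ∀ v : EuclideanSpace ℝ (Fin m), ∫ ω, ‖C v ω - v‖ ^ 2 ≤ (1 - α) * ‖v‖ ^ 2)
    (h h' G : EuclideanSpace ℝ (Fin m))
    (ε : ℝ) (hε : 0 < ε) :
    ∫ ω, ‖(G + C (h' - G) ω) - h'‖ ^ 2
      ≤ (1 - α) * (1 + ε) * ‖G - h‖ ^ 2 + (1 - α) * (1 + ε⁻¹) * ‖h' - h‖ ^ 2 :=
  ef21_one_step_stochastic_general m α hα C hC h h' G ε hε
end

section
/- Let K ≥ 1 be an integer, H̄ ≥ 1, L > 0, α ∈ (0,1], σ ≥ 0, B > 0, and define ρ_{α1} = K H̄⁴ ((1+√(1−α))/α − 1)² and ρ_{α2} = K H̄² L² / (1 − √(1−α)). Let η satisfy 0 < η ≤ 1/(√ρ_{α1} L + L). Let {F_t}, {r_t}, {s_t}, {D_t} (t = 0,...,T) be sequences of nonnegative reals satisfying, for all t < T: (i) F_{t+1} ≤ F_t − (η/2) r_t + (η K H̄² L²/2) D_t − (η/2)(1 − ηL) s_t + η² L σ²/(2B); and (ii) for every ε > 0, D_{t+1} ≤ (1−α)(1+ε) D_t + (1−α)(1+ε^{−1})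 η² H̄² (s_t + σ²/B). Then (1/T) Σ_{t=0}^{T−1} r_t ≤ 2 F_0/(η T) + (1 + η L ρ_{α1}) η L σ²/B + ρ_{α2} D_0 / T. -/
set_option maxHeartbeats 1600000

/-- **Abstract sequence form of Theorem 1 (nonconvex convergence of EF-VFL).**
`F t` plays the role of `E f(xᵗ) - f⋆`, `r t` of `E‖∇f(xᵗ)‖²`, `s t` of `E‖gᵗ‖²` and `D t`
of the expected total compression distortion.  Under the descent inequality (i) and the
recursive distortion bound (ii), the average of `r t` over `t = 0,…,T-1` is
`O(1/T)` plus a variance term, with `ρ_{α1} = K H̄⁴ ((1+√(1-α))/α - 1)²` and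
`ρ_{α2} = K H̄² L² / (1 - √(1-α))`. -/
theorem efvfl_nonconvex_rate
    (K : ℕ) (hK : 1 ≤ K) (T : ℕ)
    (Hb L α σ B η : ℝ)
    (hHb : 1 ≤ Hb) (hL : 0 < L) (hα : α ∈ Set.Ioc (0 : ℝ) 1) (hσ : 0 ≤ σ) (hB : 0 < B)
    (hη : 0 < η)
    (hηle : η ≤ 1 / (Real.sqrt ((K : ℝ) * Hb ^ 4 * ((1 + Real.sqrt (1 - α)) / α - 1) ^ 2) * L + L))
    (F r s D : ℕ → ℝ)
    (hF : ∀ t, 0 ≤ F t) (hr : ∀ t, 0 ≤ r t) (hs : ∀ t, 0 ≤ s t) (hD : ∀ t, 0 ≤ D t)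
    (h1 : ∀ t < T, F (t + 1)
      ≤ F t - (η / 2) * r t + (η * (K : ℝ) * Hb ^ 2 * L ^ 2 / 2) * D t
        - (η / 2) * (1 - η * L) * s t + η ^ 2 * L * σ ^ 2 / (2 * B))
    (h2 : ∀ t < T, ∀ ε > (0 : ℝ), D (t + 1)
      ≤ (1 - α) * (1 + ε) * D t
        + (1 - α) * (1 + ε⁻¹) * η ^ 2 * Hb ^ 2 * (s t + σ ^ 2 / B)) :
    (1 / (T : ℝ)) * ∑ t ∈ Finset.range T, r t
      ≤ 2 * F 0 / (η * T)
        + (1 + η * L * ((K : ℝ) * Hb ^ 4 * ((1 + Real.sqrt (1 - α)) / α - 1) ^ 2))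
            * η * L * σ ^ 2 / B
        + ((K : ℝ) * Hb ^ 2 * L ^ 2 / (1 - Real.sqrt (1 - α))) * D 0 / T := by
  obtain ⟨hα0, hα1⟩ := hα
  have hα' : (0:ℝ) ≤ 1 - α := by linarith
  set β := Real.sqrt (1 - α) with hβdef
  clear_value β
  have hβ0 : 0 ≤ β := hβdef ▸ Real.sqrt_nonneg _
  have hβsq : β ^ 2 = 1 - α := by rw [hβdef]; exact Real.sq_sqrt hα'
  have hβsq1 : β ^ 2 < 1 ^ 2 := by rw [hβsq, one_pow]; linarith
  have hβ1 : β < 1 := lt_of_pow_lt_pow_left₀ 2 zero_le_one hβsq1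
  have h1β : (0:ℝ) < 1 - β := by linarith
  set ρ₁ := (K : ℝ) * Hb ^ 4 * ((1 + β) / α - 1) ^ 2 with hρ₁def
  clear_value ρ₁
  have hK1 : (1:ℝ) ≤ K := by exact_mod_cast hK
  have hkey : (1 + β) / α - 1 = β / (1 - β) := by
    have hαeq : α = (1 - β) * (1 + β) := by linear_combination hβsq
    rw [hαeq]
    have h2β : (0:ℝ) < 1 + β := by linarith
    field_simp
    ring
  have hρ₁eq : ρ₁ = (K : ℝ) * Hb ^ 4 * (β / (1 - β)) ^ 2 := by rw [hρ₁def, hkey]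
  have hρ₁0 : 0 ≤ ρ₁ := by rw [hρ₁eq]; positivity
  set q := Real.sqrt ρ₁ with hqdef
  clear_value q
  have hq0 : 0 ≤ q := hqdef ▸ Real.sqrt_nonneg _
  have hqsq : q ^ 2 = ρ₁ := by rw [hqdef]; exact Real.sq_sqrt hρ₁0
  have hden : (0:ℝ) < q * L + L := by
    have := mul_nonneg hq0 hL.le; linarith
  have hstep : η * (q * L + L) ≤ 1 := by
    rw [le_div_iff₀ hden] at hηle; linarith
  have hcoef : η ^ 2 * L ^ 2 * ρ₁ + η * L ≤ 1 := by
    have ha0 : 0 ≤ η * L := by positivity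
    have h2a : 0 ≤ η * L * q := mul_nonneg ha0 hq0
    have h1a : η * L * q ≤ 1 - η * L := by linarith [hstep]
    have h3 : η * L ≤ 1 := by linarith [hstep, h2a]
    have hsq : (η * L * q) ^ 2 ≤ (1 - η * L) ^ 2 := pow_le_pow_left₀ h2a h1a 2
    have h4 : 0 ≤ η * L * (1 - η * L) := mul_nonneg ha0 (by linarith)
    have h5 : η ^ 2 * L ^ 2 * ρ₁ = (η * L * q) ^ 2 := by rw [← hqsq]; ring
    linarith [hsq, h4, h5]
  set cc := β ^ 2 / (1 - β) * η ^ 2 * Hb ^ 2 with hccdef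
  clear_value cc
  have hcc0 : 0 ≤ cc := by rw [hccdef]; positivity
  have hD2 : ∀ t < T, D (t + 1) ≤ β * D t + cc * (s t + σ ^ 2 / B) := by
    intro t ht
    have hrhs0 : 0 ≤ s t + σ ^ 2 / B := add_nonneg (hs t) (by positivity)
    by_cases hb : β = 0
    · have hα1' : (1:ℝ) - α = 0 := by
        rw [hb] at hβsq; linarith [hβsq]
      have h := h2 t ht 1 one_pos
      rw [hα1'] at h
      simp at h
      have : 0 ≤ β * D t + cc * (s t + σ ^ 2 / B) := by
        have := mul_nonneg hβ0 (hD t)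
        have := mul_nonneg hcc0 hrhs0
        linarith
      linarith
    · have hbpos : 0 < β := lt_of_le_of_ne hβ0 (Ne.symm hb)
      have hε : (0:ℝ) < (1 - β) / β := by positivity
      have h := h2 t ht ((1 - β) / β) hε
      have e1 : (1 - α) * (1 + (1 - β) / β) = β := by
        rw [← hβsq]; field_simp; ring
      have e2 : (1 - α) * (1 + ((1 - β) / β)⁻¹) * η ^ 2 * Hb ^ 2 = cc := by
        rw [← hβsq, hccdef]; field_simp; ring
      rw [e1, e2] at h
      exact h
  set γ := η * (K : ℝ) * Hb ^ 2 * L ^ 2 / (2 * (1 - β)) with hγdef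
  clear_value γ
  have hγ0 : 0 ≤ γ := by rw [hγdef]; positivity
  set C := (1 + η * L * ρ₁) * η ^ 2 * L * σ ^ 2 / (2 * B) with hCdef
  clear_value C
  have hΦ : ∀ t < T, F (t + 1) + γ * D (t + 1) + (η / 2) * r t ≤ F t + γ * D t + C := by
    intro t ht
    have hA := h1 t ht
    have hB2 := hD2 t ht
    have hBγ : γ * D (t + 1) ≤ γ * (β * D t) + γ * (cc * (s t + σ ^ 2 / B)) := by
      have h := mul_le_mul_of_nonneg_left hB2 hγ0
      rw [mul_add] at h
      exact h
    have e_D0 : η * (K : ℝ) * Hb ^ 2 * L ^ 2 / 2 + γ * β = γ := by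
      rw [hγdef]; field_simp; ring
    have e_D : (η * (K : ℝ) * Hb ^ 2 * L ^ 2 / 2) * D t + γ * (β * D t) = γ * D t := by
      linear_combination (D t) * e_D0
    have e_s0 : γ * cc = η / 2 * (η ^ 2 * L ^ 2 * ρ₁) := by
      rw [hγdef, hccdef, hρ₁eq]; field_simp
    have h1s : γ * cc * s t ≤ η / 2 * (1 - η * L) * s t := by
      apply mul_le_mul_of_nonneg_right _ (hs t)
      rw [e_s0]
      apply mul_le_mul_of_nonneg_left _ (by positivity : (0:ℝ) ≤ η / 2)
      linarith [hcoef]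
    have h2s : γ * cc * (σ ^ 2 / B) = η / 2 * (η ^ 2 * L ^ 2 * ρ₁) * (σ ^ 2 / B) := by
      rw [e_s0]
    have hscoef : γ * (cc * (s t + σ ^ 2 / B))
        ≤ η / 2 * (1 - η * L) * s t + η / 2 * (η ^ 2 * L ^ 2 * ρ₁) * (σ ^ 2 / B) := by
      linarith [h1s, h2s]
    have e_σ : η ^ 2 * L * σ ^ 2 / (2 * B) + η / 2 * (η ^ 2 * L ^ 2 * ρ₁) * (σ ^ 2 / B) = C := by
      rw [hCdef]; field_simp
    linarith [hA, hBγ, e_D, hscoef, e_σ]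
  have hsum : ∀ n, n ≤ T →
      F n + γ * D n + (η / 2) * ∑ t ∈ Finset.range n, r t ≤ F 0 + γ * D 0 + n * C := by
    intro n
    induction n with
    | zero => intro _; simp
    | succ k ih =>
      intro hk
      have hkT : k < T := Nat.lt_of_succ_le hk
      have ihh := ih (Nat.le_of_lt hkT)
      rw [Finset.sum_range_succ]
      have hstep := hΦ k hkT
      push_cast
      linarith
  have hρ' : 0 ≤ η * L * ρ₁ := mul_nonneg (mul_nonneg hη.le hL.le) hρ₁0
  have hC0 : 0 ≤ C := by
    rw [hCdef]
    apply div_nonneg _ (by positivity)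
    exact mul_nonneg (mul_nonneg (mul_nonneg (by linarith) (by positivity)) hL.le) (sq_nonneg σ)
  rcases Nat.eq_zero_or_pos T with hT | hT
  · subst hT
    simp only [Nat.cast_zero, mul_zero, div_zero, Finset.range_zero, Finset.sum_empty, zero_mul]
    have hmid : 0 ≤ (1 + η * L * ρ₁) * η * L * σ ^ 2 / B := by
      apply div_nonneg _ hB.le
      exact mul_nonneg (mul_nonneg (mul_nonneg (by linarith) hη.le) hL.le) (sq_nonneg σ)
    linarith
  · have hT0 : (0:ℝ) < T := by exact_mod_cast hT
    have hS := hsum T le_rfl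
    have hS' : (η / 2) * ∑ t ∈ Finset.range T, r t ≤ F 0 + γ * D 0 + T * C := by
      have h1' := hF T
      have h2' := mul_nonneg hγ0 (hD T)
      linarith
    calc (1 / (T : ℝ)) * ∑ t ∈ Finset.range T, r t
        = (2 / (η * T)) * ((η / 2) * ∑ t ∈ Finset.range T, r t) := by
          field_simp
      _ ≤ (2 / (η * T)) * (F 0 + γ * D 0 + T * C) :=
          mul_le_mul_of_nonneg_left hS' (by positivity)
      _ = 2 * F 0 / (η * T) + (1 + η * L * ρ₁) * η * L * σ ^ 2 / B
            + ((K : ℝ) * Hb ^ 2 * L ^ 2 / (1 - β)) * D 0 / T := by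
          rw [hγdef, hCdef]; field_simp; ring
end

section
/- Let η, L, μ, K, H̄, ε, σ, B be positive reals, α ∈ (0,1], ν = 1−α, and let c > 0 satisfy c ν (1+ε^{−1}) η² H̄² − (η/2)(1 − ηL) ≤ 0 and (η K H̄² L²)/2 + c ν (1+ε) − c(1 − ημ) ≤ 0. Let {F_t}, {r_t}, {s_t}, {D_t} be nonnegative reals satisfying F_{t+1} ≤ F_t − (η/2) r_t + (η K H̄² L²/2) D_t − (η/2)(1 − ηL) s_t + η² L σ²/(2B), D_{t+1} ≤ ν(1+ε) D_t + ν(1+ε^{−1}) η² H̄² (s_t + σ²/B), and r_t ≥ 2μ F_t. Then, with V_t = F_t + c D_t, one has V_{t+1} ≤ (1 − ημ) V_t + (L + 2 c ν (1+ε^{−1}) H̄²) η² σ² / (2B). -/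
/-- **One-step Lyapunov contraction from the proof of Theorem 2.**
With `ν = 1 - α`, if the Lyapunov coefficient `c > 0` satisfies `ψ₂(c) ≤ 0` and `ψ₃(c) ≤ 0`
(i.e. `c ν (1+ε⁻¹) η² H̄² - (η/2)(1-ηL) ≤ 0` and
`(η K H̄² L²)/2 + c ν (1+ε) - c(1-ημ) ≤ 0`), then the Lyapunov function `V_t = F_t + c D_t`
satisfies `V_{t+1} ≤ (1-ημ) V_t + (L + 2cν(1+ε⁻¹)H̄²) η²σ²/(2B)`. -/
theorem lyapunov_one_step
    (η L μ K Hb ε σ B α : ℝ)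
    (hη : 0 < η) (hL : 0 < L) (hμ : 0 < μ) (hK : 0 < K) (hHb : 0 < Hb) (hε : 0 < ε)
    (hσ : 0 < σ) (hB : 0 < B) (hα : α ∈ Set.Ioc (0 : ℝ) 1)
    (c : ℝ) (hc : 0 < c)
    (hψ2 : c * (1 - α) * (1 + ε⁻¹) * η ^ 2 * Hb ^ 2 - (η / 2) * (1 - η * L) ≤ 0)
    (hψ3 : η * K * Hb ^ 2 * L ^ 2 / 2 + c * (1 - α) * (1 + ε) - c * (1 - η * μ) ≤ 0)
    (F r s D : ℕ → ℝ)
    (hF : ∀ t, 0 ≤ F t) (hr : ∀ t, 0 ≤ r t) (hs : ∀ t, 0 ≤ s t) (hD : ∀ t, 0 ≤ D t)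
    (h1 : ∀ t, F (t + 1)
      ≤ F t - (η / 2) * r t + (η * K * Hb ^ 2 * L ^ 2 / 2) * D t
        - (η / 2) * (1 - η * L) * s t + η ^ 2 * L * σ ^ 2 / (2 * B))
    (h2 : ∀ t, D (t + 1)
      ≤ (1 - α) * (1 + ε) * D t
        + (1 - α) * (1 + ε⁻¹) * η ^ 2 * Hb ^ 2 * (s t + σ ^ 2 / B))
    (h3 : ∀ t, r t ≥ 2 * μ * F t) :
    ∀ t, F (t + 1) + c * D (t + 1)
      ≤ (1 - η * μ) * (F t + c * D t)
        + (L + 2 * c * (1 - α) * (1 + ε⁻¹) * Hb ^ 2) * η ^ 2 * σ ^ 2 / (2 * B) := by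
  intro t
  have h1t := h1 t
  have h2t := h2 t
  have h3t := h3 t
  have hBne : B ≠ 0 := ne_of_gt hB
  have hst := hs t
  have hDt := hD t
  have hFt := hF t
  have e0 : σ ^ 2 / (2 * B) = (σ ^ 2 / B) / 2 := by
    field_simp
  have e1 : η ^ 2 * L * σ ^ 2 / (2 * B) = L * η ^ 2 * (σ ^ 2 / B) / 2 := by
    field_simp
  have e2 : (L + 2 * c * (1 - α) * (1 + ε⁻¹) * Hb ^ 2) * η ^ 2 * σ ^ 2 / (2 * B)
      = (L + 2 * c * (1 - α) * (1 + ε⁻¹) * Hb ^ 2) * η ^ 2 * (σ ^ 2 / B) / 2 := by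
    field_simp
    try ring
    try exact Or.inl trivial
  have p2 : c * D (t + 1) ≤ c * ((1 - α) * (1 + ε) * D t
      + (1 - α) * (1 + ε⁻¹) * η ^ 2 * Hb ^ 2 * (s t + σ ^ 2 / B)) :=
    mul_le_mul_of_nonneg_left h2t (le_of_lt hc)
  have p3 : (η / 2) * (2 * μ * F t) ≤ (η / 2) * r t :=
    mul_le_mul_of_nonneg_left h3t (le_of_lt (half_pos hη))
  have p4 : (c * (1 - α) * (1 + ε⁻¹) * η ^ 2 * Hb ^ 2 - (η / 2) * (1 - η * L)) * s t ≤ 0 :=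
    mul_nonpos_of_nonpos_of_nonneg hψ2 hst
  have p5 : (η * K * Hb ^ 2 * L ^ 2 / 2 + c * (1 - α) * (1 + ε) - c * (1 - η * μ)) * D t ≤ 0 :=
    mul_nonpos_of_nonpos_of_nonneg hψ3 hDt
  rw [e1] at h1t
  rw [e2]
  linarith [p2, p3, p4, p5, h1t]
end
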